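/- Let k be a field of characteristic different from 2 and 3, let E be an elliptic curve over k given by a Weierstrass equation with nonzero discriminant, and let P be a k-rational point of E whose order in the group E(k) is exactly 3. Then there exist β ∈ k and e ∈ {0,1} and an admissible change of Weierstrass variables over k transforming E into the Weierstrass curve W' : y² + e·x·y + β·y = x³ (i.e. with coefficients a1 = e, a2 = 0, a3 = β, a4 = 0, a6 = 0; necessarily of nonzero discriminant), such that the induced isomorphism of groups of points sends P to the affine point (0, 0) of W'. -/

import Mathlib

open WeierstrassCurve.Affine WeierstrassCurve.Affine.Point

open Classical in
/-- **Lemma**: an elliptic curve over a field of characteristic ≠ 2, 3 with a rational point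
`P` of order exactly 3 can be brought, by an admissible change of Weierstrass variables, to
the form `y² + e·xy + β·y = x³` with `e ∈ {0,1}`, in such a way that `P` corresponds to the
affine point `(0,0)` of the new curve (i.e. the coordinates of `P` are `(r, t)`, since the
change of variables is `(x, y) = (u²·x' + r, u³·y' + u²·s·x' + t)`). -/
theorem stmt4 (k : Type*) [Field k] (hk2 : (2 : k) ≠ 0) (hk3 : (3 : k) ≠ 0)
    (W : WeierstrassCurve.Affine k) (hΔ : W.Δ ≠ 0)
    (P : W.Point) (hP : addOrderOf P = 3) :
    ∃ (β e : k), (e = 0 ∨ e = 1) ∧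
      ∃ (u : kˣ) (r s t : k),
        (⟨u, r, s, t⟩ : WeierstrassCurve.VariableChange k) • W =
          ({ a₁ := e, a₂ := 0, a₃ := β, a₄ := 0, a₆ := 0 } : WeierstrassCurve k) ∧
        ∃ (h : W.Nonsingular r t), P = WeierstrassCurve.Affine.Point.some r t h := by
  have hP0 : P ≠ 0 := by
    intro h0; rw [h0, addOrderOf_zero] at hP; exact absurd hP (by norm_num)
  obtain ⟨x₀, y₀, hns, rfl⟩ : ∃ (x y : k) (hns : W.Nonsingular x y), P = WeierstrassCurve.Affine.Point.some _ _ hns := by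
    cases P with
    | zero => exact absurd rfl hP0
    | some _ _ hns => exact ⟨_, _, hns, rfl⟩
  have hy : y₀ ≠ W.negY x₀ y₀ := by
    intro hy
    have h2 : (2 : ℕ) • (WeierstrassCurve.Affine.Point.some _ _ hns) = 0 := by
      rw [two_nsmul]; exact add_self_of_Y_eq hy
    have hdvd := addOrderOf_dvd_of_nsmul_eq_zero h2
    rw [hP] at hdvd; norm_num at hdvd
  have h2 : WeierstrassCurve.Affine.Point.some _ _ hns + WeierstrassCurve.Affine.Point.some _ _ hns
      = -WeierstrassCurve.Affine.Point.some _ _ hns := by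
    have h3 : (3 : ℕ) • (WeierstrassCurve.Affine.Point.some _ _ hns) = 0 :=
      hP ▸ addOrderOf_nsmul_eq_zero _
    rw [show (3 : ℕ) = 2 + 1 from rfl, add_nsmul, two_nsmul, one_nsmul] at h3
    exact eq_neg_of_add_eq_zero_left h3
  rw [add_self_of_Y_ne hy, neg_some] at h2
  injection h2 with hx hy'
  set L := W.slope x₀ x₀ y₀ y₀ with hL
  have hd : y₀ - W.negY x₀ y₀ ≠ 0 := sub_ne_zero.2 hy
  have hs : L * (y₀ - W.negY x₀ y₀) = 3 * x₀ ^ 2 + 2 * W.a₂ * x₀ + W.a₄ - W.a₁ * y₀ := by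
    rw [hL, slope_of_Y_ne rfl hy, div_mul_cancel₀ _ hd]
  simp only [WeierstrassCurve.Affine.negY] at hs
  simp only [WeierstrassCurve.Affine.addX] at hx
  have heq : y₀ ^ 2 + W.a₁ * x₀ * y₀ + W.a₃ * y₀ = x₀ ^ 3 + W.a₂ * x₀ ^ 2 + W.a₄ * x₀ + W.a₆ :=
    (W.equation_iff x₀ y₀).1 hns.1
  have n2 : W.a₂ - L * W.a₁ + 3 * x₀ - L ^ 2 = 0 := by linear_combination -hx
  have n4 : W.a₄ - L * W.a₃ + 2 * x₀ * W.a₂ - (y₀ + x₀ * L) * W.a₁ + 3 * x₀ ^ 2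
      - 2 * L * y₀ = 0 := by linear_combination -hs
  have n6 : W.a₆ + x₀ * W.a₄ + x₀ ^ 2 * W.a₂ + x₀ ^ 3 - y₀ * W.a₃ - y₀ ^ 2
      - x₀ * y₀ * W.a₁ = 0 := by linear_combination -heq
  by_cases hc : W.a₁ + 2 * L = 0
  · refine ⟨W.a₃ + x₀ * W.a₁ + 2 * y₀, 0, Or.inl rfl, 1, x₀, L, y₀, ?_, hns, rfl⟩
    ext <;> simp only [WeierstrassCurve.variableChange_a₁, WeierstrassCurve.variableChange_a₂,
      WeierstrassCurve.variableChange_a₃, WeierstrassCurve.variableChange_a₄,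
      WeierstrassCurve.variableChange_a₆, inv_one, Units.val_one, one_pow, one_mul]
    · exact hc
    · linear_combination n2
    · linear_combination n4
    · linear_combination n6
  · refine ⟨(W.a₁ + 2 * L)⁻¹ ^ 3 * (W.a₃ + x₀ * W.a₁ + 2 * y₀), 1, Or.inr rfl,
      Units.mk0 _ hc, x₀, L, y₀, ?_, hns, rfl⟩
    ext <;> simp only [WeierstrassCurve.variableChange_a₁, WeierstrassCurve.variableChange_a₂,
      WeierstrassCurve.variableChange_a₃, WeierstrassCurve.variableChange_a₄,
      WeierstrassCurve.variableChange_a₆, Units.val_inv_eq_inv_val, Units.val_mk0]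
    · exact inv_mul_cancel₀ hc
    · linear_combination (W.a₁ + 2 * L)⁻¹ ^ 2 * n2
    · linear_combination (W.a₁ + 2 * L)⁻¹ ^ 4 * n4
    · linear_combination (W.a₁ + 2 * L)⁻¹ ^ 6 * n6
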